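/- arXiv:1701.04443 — 5 statements merged into one kernel-verified Lean document; each statement's English description precedes it below -/
import Mathlib

section
/- Let D : ℓ² × ℓ² → ℓ² be a bounded bilinear map on ℓ² = ℓ²(ℕ;ℝ). Suppose there is a constant C > 0 such that every family w = (wₙ)ₙ of functions wₙ : [0,∞) → ℝ with ‖w‖_* := (Σₙ (sup_{x≥0} |wₙ(x)|)²)^{1/2} < ∞ satisfies (Σₙ (sup_{x≥0} |D(w(x),w(x))ₙ|)²)^{1/2} ≤ C‖w‖_*². Then for every α ∈ ℓ² with nonnegative entries, the sequence 𝒮(α) given by 𝒮ₙ(α) = sup{ |D(v,v)ₙ| : v ∈ ℓ², |vₘ| ≤ αₘ for all m } belongs to ℓ² and satisfies ‖𝒮(α)‖_{ℓ²} ≤ 2C‖α‖_{ℓ²}². -/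
open scoped NNReal
open scoped ENNReal

/-- `ℓ² = ℓ²(ℕ;ℝ)`, the real Hilbert space of square-summable sequences. -/
noncomputable abbrev ellTwo : Type := lp (fun _ : ℕ => ℝ) 2

/-- If the reverse-norm space is closed under the action of `D` with
constant `C` (i.e. `‖D_*(w,w)‖_* ≤ C ‖w‖_*²` for every `w` of finite reverse norm), then
for every nonnegative `α ∈ ℓ²` the sup-sequence `𝒮(α)` is square-summable with
`‖𝒮(α)‖ ≤ 2C ‖α‖²`. -/
theorem stmt1 (D : ellTwo →L[ℝ] ellTwo →L[ℝ] ellTwo) (C : ℝ) (hC : 0 < C)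
    (hD : ∀ w : ℝ≥0 → ellTwo,
      (∀ n, BddAbove (Set.range fun x : ℝ≥0 => |w x n|)) →
      Summable (fun n => (⨆ x : ℝ≥0, |w x n|) ^ 2) →
      (∀ n, BddAbove (Set.range fun x : ℝ≥0 => |D (w x) (w x) n|)) ∧
      Summable (fun n => (⨆ x : ℝ≥0, |D (w x) (w x) n|) ^ 2) ∧
      Real.sqrt (∑' n, (⨆ x : ℝ≥0, |D (w x) (w x) n|) ^ 2)
        ≤ C * (∑' n, (⨆ x : ℝ≥0, |w x n|) ^ 2))
    (α : ellTwo) (hα : ∀ n, 0 ≤ α n) :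
    Summable (fun n =>
      (sSup {y : ℝ | ∃ v : ellTwo, (∀ m, |v m| ≤ α m) ∧ y = |D v v n|}) ^ 2) ∧
    Real.sqrt (∑' n,
      (sSup {y : ℝ | ∃ v : ellTwo, (∀ m, |v m| ≤ α m) ∧ y = |D v v n|}) ^ 2)
      ≤ 2 * C * ‖α‖ ^ 2 := by
  classical
  set Eset : Set ellTwo := {v | ∀ m, |v m| ≤ α m} with hEset
  have hα_mem : α ∈ Eset := fun m => by rw [abs_of_nonneg (hα m)]
  have hne : Nonempty Eset := ⟨⟨α, hα_mem⟩⟩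
  -- cardinality: Eset injects into ℝ≥0
  have hcard : Cardinal.mk Eset ≤ Cardinal.mk ℝ≥0 := by
    calc Cardinal.mk Eset ≤ Cardinal.mk ellTwo := Cardinal.mk_set_le _
      _ ≤ Cardinal.mk (ℕ → ℝ) :=
        Cardinal.mk_le_of_injective (f := fun v : ellTwo => (v : ℕ → ℝ))
          (fun a b h => lp.ext h)
      _ = Cardinal.continuum := by
        rw [Cardinal.mk_arrow, Cardinal.mk_real, Cardinal.lift_id, Cardinal.mk_nat,
          Cardinal.lift_aleph0, Cardinal.continuum_power_aleph0]
      _ = Cardinal.mk ℝ := Cardinal.mk_real.symm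
      _ ≤ Cardinal.mk ℝ≥0 := Cardinal.mk_le_of_injective
          (f := fun x : ℝ => (⟨Real.exp x, (Real.exp_pos x).le⟩ : ℝ≥0))
          (fun a b h => Real.exp_injective (congrArg Subtype.val h))
  obtain ⟨e⟩ := Cardinal.le_def _ _ |>.mp hcard
  have hsurj : Function.Surjective (Function.invFun e) :=
    Function.invFun_surjective e.injective
  set w : ℝ≥0 → ellTwo := fun x => ((Function.invFun e x : Eset) : ellTwo) with hw
  have hbd : ∀ n x, |w x n| ≤ α n := fun n x => (Function.invFun e x).2 n
  have hBdd : ∀ n, BddAbove (Set.range fun x : ℝ≥0 => |w x n|) := by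
    intro n
    exact ⟨α n, by rintro _ ⟨x, rfl⟩; exact hbd n x⟩
  have sup_eq : ∀ n, (⨆ x : ℝ≥0, |w x n|) = α n := by
    intro n
    refine le_antisymm (ciSup_le fun x => hbd n x) ?_
    obtain ⟨x₀, hx₀⟩ := hsurj ⟨α, hα_mem⟩
    have hwx : w x₀ = α := by rw [hw]; simp [hx₀]
    calc α n = |w x₀ n| := by rw [hwx, abs_of_nonneg (hα n)]
      _ ≤ ⨆ x : ℝ≥0, |w x n| := le_ciSup (hBdd n) x₀
  -- summability of (α n)^2 and norm formula
  have hsumα : Summable (fun n => (α n) ^ 2) := by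
    have h := (lp.memℓp α).summable (p := 2) (by norm_num)
    have : ∀ n : ℕ, ‖α n‖ ^ (2 : ℝ≥0∞).toReal = (α n) ^ 2 := by
      intro n
      rw [ENNReal.toReal_ofNat, Real.norm_eq_abs, abs_of_nonneg (hα n)]
      rw [show ((2 : ℝ)) = ((2 : ℕ) : ℝ) by norm_num, Real.rpow_natCast]
    simpa [this] using h
  have hnorm : ‖α‖ ^ 2 = ∑' n, (α n) ^ 2 := by
    have h := lp.norm_rpow_eq_tsum (p := 2) (by norm_num) α
    have h2 : ∀ n : ℕ, ‖α n‖ ^ (2 : ℝ≥0∞).toReal = (α n) ^ 2 := by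
      intro n
      rw [ENNReal.toReal_ofNat, Real.norm_eq_abs, abs_of_nonneg (hα n)]
      rw [show ((2 : ℝ)) = ((2 : ℕ) : ℝ) by norm_num, Real.rpow_natCast]
    rw [ENNReal.toReal_ofNat] at h
    rw [show ((2 : ℝ)) = ((2 : ℕ) : ℝ) by norm_num, Real.rpow_natCast] at h
    simpa [h2] using h
  have hsumw : Summable (fun n => (⨆ x : ℝ≥0, |w x n|) ^ 2) := by
    simpa [sup_eq] using hsumα
  obtain ⟨h1, h2, h3⟩ := hD w hBdd hsumw
  -- identify the sSup with the iSup
  have seteq : ∀ n, {y : ℝ | ∃ v : ellTwo, (∀ m, |v m| ≤ α m) ∧ y = |D v v n|}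
      = Set.range (fun x : ℝ≥0 => |D (w x) (w x) n|) := by
    intro n
    ext y
    constructor
    · rintro ⟨v, hv, rfl⟩
      obtain ⟨x, hx⟩ := hsurj ⟨v, hv⟩
      refine ⟨x, ?_⟩
      have hwx : w x = v := by rw [hw]; simp [hx]
      simp [hwx]
    · rintro ⟨x, rfl⟩
      exact ⟨w x, fun m => hbd m x, rfl⟩
  have key : ∀ n, sSup {y : ℝ | ∃ v : ellTwo, (∀ m, |v m| ≤ α m) ∧ y = |D v v n|}
      = ⨆ x : ℝ≥0, |D (w x) (w x) n| := by
    intro n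
    rw [seteq n]
    rfl
  constructor
  · simp only [key]; exact h2
  · have hs : (∑' n, (sSup {y : ℝ | ∃ v : ellTwo, (∀ m, |v m| ≤ α m) ∧ y = |D v v n|}) ^ 2)
        = ∑' n, (⨆ x : ℝ≥0, |D (w x) (w x) n|) ^ 2 := by
      simp only [key]
    rw [hs]
    calc Real.sqrt (∑' n, (⨆ x : ℝ≥0, |D (w x) (w x) n|) ^ 2)
        ≤ C * (∑' n, (⨆ x : ℝ≥0, |w x n|) ^ 2) := h3
      _ = C * ‖α‖ ^ 2 := by rw [hnorm]; simp only [sup_eq]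
      _ ≤ 2 * C * ‖α‖ ^ 2 := by nlinarith [sq_nonneg ‖α‖]
end

section
/- There do not exist a kernel 𝒟 : ℕ³ → ℝ with Σ_{l,m,n} 𝒟(l,m,n)² < ∞ and a vector ū ∈ ℓ²(ℕ;ℝ) such that Σ_{m,n} 𝒟(l,m,n) ūₘ vₙ = −2 v_l for every v ∈ ℓ²(ℕ;ℝ) and every l ∈ ℕ. (In other words, the Hilbert–Schmidt condition on the kernel of the bilinear map D is incompatible with the relation D(ū,·) = −2·Id arising from linearization of Γu′ = D̃(u,u).) -/
/-!
Testing the relation against the unit vector `v = e_k` at `l = k` gives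
`Σ_m 𝒟(k,m,k) ūₘ = -2`, so by Cauchy–Schwarz `4 ≤ (Σ_m 𝒟(k,m,k)²) ‖ū‖²` for every `k`.
But the diagonal slice `(k, m) ↦ 𝒟(k,m,k)` of a square-summable kernel is square-summable,
so its row sums `Σ_m 𝒟(k,m,k)²` tend to `0` as `k → ∞`.
-/

open Filter Topology

theorem memℓp_two_of_summable_sq {ι : Type*} {f : ι → ℝ} (hf : Summable (fun i => f i ^ 2)) :
    Memℓp f 2 :=
  memℓp_gen (by simpa using hf)

theorem tsum_mul_sq_le_sq_mul_sq {ι : Type*} {f g : ι → ℝ} (hf : Summable (fun i => f i ^ 2))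
    (hg : Summable (fun i => g i ^ 2)) :
    (∑' i, f i * g i) ^ 2 ≤ (∑' i, f i ^ 2) * ∑' i, g i ^ 2 := by
  let F : lp (fun _ : ι => ℝ) 2 := ⟨f, memℓp_two_of_summable_sq hf⟩
  let G : lp (fun _ : ι => ℝ) 2 := ⟨g, memℓp_two_of_summable_sq hg⟩
  have := real_inner_mul_inner_self_le F G
  simp only [lp.inner_eq_tsum, RCLike.inner_apply, conj_trivial] at this
  simpa [F, G, sq, mul_comm] using this

theorem tsum_prod_mul_single {α β R : Type*} [DecidableEq β] [NonAssocSemiring R]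
    [TopologicalSpace R] (g : α × β → R) (k : β) :
    ∑' p : α × β, g p * (Pi.single k 1 : β → R) p.2 = ∑' a, g (a, k) := by
  have hsupp : Function.support (fun p : α × β => g p * (Pi.single k 1 : β → R) p.2) ⊆
      Set.range (fun a => (a, k)) := by
    rintro ⟨a, b⟩ hp
    obtain rfl : b = k := by
      by_contra hb
      simp [hb] at hp
    exact ⟨a, rfl⟩
  rw [← (Prod.mk_left_injective k).tsum_eq hsupp]
  simp

theorem summable_sq_single {β : Type*} [DecidableEq β] (k : β) :
    Summable (fun n => (Pi.single k 1 : β → ℝ) n ^ 2) :=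
  (hasSum_pi_single k (1 : ℝ)).summable.congr fun n => by
    rcases eq_or_ne n k with rfl | h <;> simp [*]

theorem Summable.comp_diag {α β M : Type*} [AddCommGroup M] [UniformSpace M]
    [IsUniformAddGroup M] [CompleteSpace M] {f : α × β × α → M} (hf : Summable f) :
    Summable (fun p : α × β => f (p.1, p.2, p.1)) :=
  hf.comp_injective (i := fun p : α × β => (p.1, p.2, p.1)) fun _ _ hpq =>
    Prod.ext (congrArg Prod.fst hpq :) (congrArg (Prod.fst ∘ Prod.snd) hpq :)

/-- There is no square-summable (Hilbert–Schmidt) kernel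
`𝒟 : ℕ³ → ℝ` and vector `ū ∈ ℓ²(ℕ;ℝ)` such that
`Σ_{m,n} 𝒟(l,m,n) ūₘ vₙ = −2 v_l` for every `v ∈ ℓ²` and every `l`. -/
theorem stmt4 : ¬ ∃ (𝒟 : ℕ × ℕ × ℕ → ℝ) (u : ℕ → ℝ),
    Summable (fun t => (𝒟 t) ^ 2) ∧ Summable (fun m => (u m) ^ 2) ∧
    ∀ v : ℕ → ℝ, Summable (fun n => (v n) ^ 2) →
      ∀ l, ∑' p : ℕ × ℕ, 𝒟 (l, p.1, p.2) * u p.1 * v p.2 = -2 * v l := by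
  rintro ⟨𝒟, u, h𝒟, hu, h⟩
  have hdiag : Summable (fun p : ℕ × ℕ => 𝒟 (p.1, p.2, p.1) ^ 2) := h𝒟.comp_diag
  have hrow : ∀ k, 4 ≤ (∑' m, 𝒟 (k, m, k) ^ 2) * ∑' m, u m ^ 2 := by
    intro k
    have hk := h (Pi.single k 1) (summable_sq_single k) k
    rw [tsum_prod_mul_single (fun p => 𝒟 (k, p.1, p.2) * u p.1), Pi.single_eq_same] at hk
    calc (4 : ℝ) = (∑' m, 𝒟 (k, m, k) * u m) ^ 2 := by rw [hk]; norm_num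
      _ ≤ _ := tsum_mul_sq_le_sq_mul_sq (hdiag.prod_factor k) hu
  have hlim : Tendsto (fun k => (∑' m, 𝒟 (k, m, k) ^ 2) * ∑' m, u m ^ 2) atTop (𝓝 0) := by
    have hrows := ((summable_prod_of_nonneg fun _ => sq_nonneg _).mp hdiag).2
    simpa using hrows.tendsto_atTop_zero.mul_const (∑' m, u m ^ 2)
  obtain ⟨k, hk⟩ := (hlim.eventually (gt_mem_nhds four_pos)).exists
  exact (hrow k).not_gt hk
end

section
/- Let θ₀ ∈ (0, π/2), ρ > 0, and q = (q₁, q₂)ᵀ ∈ ℝ² with q₁ > 0, q₂ > 0 and M₁⁺(θ₀)q = ρq. Define vectors u_j ∈ ℝ^{2^j} recursively by u₁ = q and u_{j+1} = (q₁ u_j, q₂ u_j)ᵀ (concatenation of the two scaled copies). Then for every j ≥ 1, ⟨u_j, |M_j(θ₀)| u_j⟩ ≥ ρ^j ‖u_j‖², where |M_j(θ₀)| is the entrywise absolute value of M_j(θ₀) and ‖·‖, ⟨·,·⟩ are the Euclidean norm and inner product on ℝ^{2^j}. -/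
/-- The equivalence `Fin 2^j ⊕ Fin 2^j ≃ Fin 2^(j+1)` used to assemble block matrices. -/
def pe (j : ℕ) : Fin (2 ^ j) ⊕ Fin (2 ^ j) ≃ Fin (2 ^ (j + 1)) :=
  finSumFinEquiv.trans (finCongr (by rw [pow_succ, mul_two] : (2 : ℕ) ^ (j + 1) = 2 ^ j + 2 ^ j).symm)

/-- The matrices `M_j(θ)`: `M_1(θ) = [[cos θ, sin θ], [sin θ, −cos θ]]` and
`M_{j+1}(θ)` is built from `M_j(θ)` in 2×2 block form. (`M_0` is a dummy value;
all statements concern `j ≥ 1`.) -/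
noncomputable def Mmat (θ : ℝ) : (j : ℕ) → Matrix (Fin (2 ^ j)) (Fin (2 ^ j)) ℝ
  | 0 => 1
  | 1 => Matrix.of ![![Real.cos θ, Real.sin θ], ![Real.sin θ, -Real.cos θ]]
  | (j + 2) => Matrix.reindex (pe (j + 1)) (pe (j + 1))
      (Matrix.fromBlocks
        (Real.cos θ • Mmat θ (j + 1)) (Real.sin θ • Mmat θ (j + 1))
        (Real.sin θ • Mmat θ (j + 1)) ((-Real.cos θ) • Mmat θ (j + 1)))
/-- The test vectors `u_j ∈ ℝ^{2^j}`: `u₁ = q` and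
`u_{j+1} = (q₁ u_j, q₂ u_j)ᵀ` (concatenation). (`j = 0` is a dummy value.) -/
noncomputable def uvec (q : Fin 2 → ℝ) : (j : ℕ) → Fin (2 ^ j) → ℝ
  | 0 => fun _ => 1
  | 1 => fun i => q (finCongr (by norm_num : (2 : ℕ) ^ 1 = 2) i)
  | (j + 2) => fun i =>
      Sum.elim (fun k => q 0 * uvec q (j + 1) k) (fun k => q 1 * uvec q (j + 1) k)
        ((pe (j + 1)).symm i)

/-! Entrywise, `|M_{j+1}(θ)| = |M₁(θ)| ⊗ |M_j(θ)|` and `u_{j+1} = q ⊗ u_j` (Kronecker products in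
block layout), so both sides of the inequality are multiplicative in `j`:
`⟨u_j, |M_j| u_j⟩ = ⟨q, |M₁| q⟩ ^ j` and `‖u_j‖² = ‖q‖² ^ j`. It remains to compare the factors.
The eigenvector equation gives `ρ ‖q‖² = ⟨q, M₁⁺ q⟩ = cos θ q₁² + 2 sin θ q₁ q₂`, and since
`q₁ q₂ ≥ 0` this is at most `|cos θ| (q₁² + q₂²) + 2 |sin θ| q₁ q₂ = ⟨q, |M₁| q⟩` in absolute value. -/

open Matrix

section BlockKronecker

variable {R n : Type*}

def blockKron [Mul R] (K : Matrix (Fin 2) (Fin 2) R) (N : Matrix n n R) :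
    Matrix (n ⊕ n) (n ⊕ n) R :=
  fromBlocks (K 0 0 • N) (K 0 1 • N) (K 1 0 • N) (K 1 1 • N)

theorem blockKron_map_abs [Ring R] [LinearOrder R] [IsOrderedRing R]
    (K : Matrix (Fin 2) (Fin 2) R) (N : Matrix n n R) :
    (blockKron K N).map abs = blockKron (K.map abs) (N.map abs) := by
  ext (i | i) (l | l) <;> simp [blockKron]

variable [Fintype n] [CommRing R]

theorem sumElim_dotProduct_blockKron_mulVec (K : Matrix (Fin 2) (Fin 2) R) (N : Matrix n n R)
    (q : Fin 2 → R) (x : n → R) :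
    Sum.elim (q 0 • x) (q 1 • x) ⬝ᵥ blockKron K N *ᵥ Sum.elim (q 0 • x) (q 1 • x)
      = (q ⬝ᵥ K *ᵥ q) * (x ⬝ᵥ N *ᵥ x) := by
  have hq : q ⬝ᵥ K *ᵥ q
      = q 0 * (K 0 0 * q 0 + K 0 1 * q 1) + q 1 * (K 1 0 * q 0 + K 1 1 * q 1) := by
    simp [dotProduct, mulVec, Fin.sum_univ_two]
  simp only [blockKron, fromBlocks_mulVec, sumElim_dotProduct_sumElim, Function.comp_def,
    Sum.elim_inl, Sum.elim_inr, smul_mulVec, mulVec_smul, dotProduct_add, dotProduct_smul,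
    smul_dotProduct, smul_eq_mul, hq]
  ring

theorem sumElim_dotProduct_sumElim_smul (q : Fin 2 → R) (x : n → R) :
    Sum.elim (q 0 • x) (q 1 • x) ⬝ᵥ Sum.elim (q 0 • x) (q 1 • x) = (q ⬝ᵥ q) * (x ⬝ᵥ x) := by
  simp only [sumElim_dotProduct_sumElim, dotProduct_smul, smul_dotProduct, smul_eq_mul]
  simp only [dotProduct, Fin.sum_univ_two]
  ring

end BlockKronecker

theorem dotProduct_reindex_mulVec {m n R : Type*} [Fintype m] [Fintype n] [CommSemiring R]
    (e : m ≃ n) (M : Matrix m m R) (v : n → R) :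
    v ⬝ᵥ reindex e e M *ᵥ v = (v ∘ e) ⬝ᵥ M *ᵥ (v ∘ e) := by
  rw [reindex_apply, submatrix_mulVec_equiv, Equiv.symm_symm, dotProduct_comp_equiv_symm]

noncomputable def M₁ (θ : ℝ) : Matrix (Fin 2) (Fin 2) ℝ :=
  !![Real.cos θ, Real.sin θ; Real.sin θ, -Real.cos θ]

theorem Mmat_succ (θ : ℝ) {j : ℕ} (hj : 1 ≤ j) :
    Mmat θ (j + 1) = reindex (pe j) (pe j) (blockKron (M₁ θ) (Mmat θ j)) := by
  obtain ⟨k, rfl⟩ := Nat.exists_eq_add_of_le' hj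
  simp [Mmat, blockKron, M₁]

theorem uvec_succ_comp_pe (q : Fin 2 → ℝ) {j : ℕ} (hj : 1 ≤ j) :
    uvec q (j + 1) ∘ pe j = Sum.elim (q 0 • uvec q j) (q 1 • uvec q j) := by
  obtain ⟨k, rfl⟩ := Nat.exists_eq_add_of_le' hj
  ext i
  simp only [uvec, Function.comp_apply, Equiv.symm_apply_apply]
  rfl

theorem uvec_dotProduct_uvec (q : Fin 2 → ℝ) {j : ℕ} (hj : 1 ≤ j) :
    uvec q j ⬝ᵥ uvec q j = (q ⬝ᵥ q) ^ j := by
  induction j, hj using Nat.le_induction with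
  | base => exact (pow_one _).symm
  | succ j hj ih =>
    rw [← comp_equiv_dotProduct_comp_equiv (e := pe j), uvec_succ_comp_pe q hj,
      sumElim_dotProduct_sumElim_smul, ih, pow_succ']

theorem uvec_dotProduct_map_abs_Mmat_mulVec (θ : ℝ) (q : Fin 2 → ℝ) {j : ℕ} (hj : 1 ≤ j) :
    uvec q j ⬝ᵥ (Mmat θ j).map abs *ᵥ uvec q j = (q ⬝ᵥ (M₁ θ).map abs *ᵥ q) ^ j := by
  induction j, hj using Nat.le_induction with
  | base => exact (pow_one _).symm
  | succ j hj ih =>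
    rw [Mmat_succ θ hj, reindex_apply, ← submatrix_map, ← reindex_apply,
      dotProduct_reindex_mulVec, uvec_succ_comp_pe q hj, blockKron_map_abs,
      sumElim_dotProduct_blockKron_mulVec, ih, pow_succ']

theorem abs_eigenvalue_mul_dotProduct_self_le (θ ρ : ℝ) (q : Fin 2 → ℝ) (hq : 0 ≤ q 0 * q 1)
    (heig : !![Real.cos θ, Real.sin θ; Real.sin θ, 0] *ᵥ q = ρ • q) :
    |ρ * (q ⬝ᵥ q)| ≤ q ⬝ᵥ (M₁ θ).map abs *ᵥ q := by
  have h0 : Real.cos θ * q 0 + Real.sin θ * q 1 = ρ * q 0 := by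
    simpa [mulVec, dotProduct, Fin.sum_univ_two] using congrFun heig 0
  have h1 : Real.sin θ * q 0 = ρ * q 1 := by
    simpa [mulVec, dotProduct, Fin.sum_univ_two] using congrFun heig 1
  have hρ : ρ * (q ⬝ᵥ q) = Real.cos θ * q 0 ^ 2 + 2 * Real.sin θ * (q 0 * q 1) := by
    simp only [dotProduct, Fin.sum_univ_two]
    linear_combination -(q 0 * h0) - q 1 * h1
  have hM : q ⬝ᵥ (M₁ θ).map abs *ᵥ q
      = |Real.cos θ| * q 0 ^ 2 + 2 * |Real.sin θ| * (q 0 * q 1) + |Real.cos θ| * q 1 ^ 2 := by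
    simp only [dotProduct, mulVec, M₁, map_apply, of_apply, cons_val', cons_val_fin_one,
      Fin.sum_univ_two, cons_val_zero, cons_val_one, abs_neg]
    ring
  rw [hρ, hM]
  calc |Real.cos θ * q 0 ^ 2 + 2 * Real.sin θ * (q 0 * q 1)|
      ≤ |Real.cos θ| * q 0 ^ 2 + 2 * |Real.sin θ| * (q 0 * q 1) := by
        refine (abs_add_le _ _).trans_eq ?_
        rw [abs_mul, abs_mul, abs_mul, abs_two, abs_sq, abs_of_nonneg hq]
    _ ≤ _ := le_add_of_nonneg_right (by positivity)

theorem stmt12_general (θ₀ ρ : ℝ)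
    (q : Fin 2 → ℝ) (hq0 : 0 < q 0) (hq1 : 0 < q 1)
    (heig : (Matrix.of ![![Real.cos θ₀, Real.sin θ₀], ![Real.sin θ₀, 0]]).mulVec q
      = ρ • q)
    (j : ℕ) (hj : 1 ≤ j) :
    ρ ^ j * ∑ i, (uvec q j i) ^ 2
      ≤ ∑ i, uvec q j i * ((Mmat θ₀ j).map (fun t => |t|)).mulVec (uvec q j) i := by
  calc ρ ^ j * ∑ i, uvec q j i ^ 2 = (ρ * (q ⬝ᵥ q)) ^ j := by
        rw [mul_pow, ← uvec_dotProduct_uvec q hj]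
        simp only [dotProduct, sq]
    _ ≤ |ρ * (q ⬝ᵥ q)| ^ j := (le_abs_self _).trans_eq (abs_pow _ _)
    _ ≤ (q ⬝ᵥ (M₁ θ₀).map abs *ᵥ q) ^ j :=
        pow_le_pow_left₀ (abs_nonneg _)
          (abs_eigenvalue_mul_dotProduct_self_le θ₀ ρ q (mul_pos hq0 hq1).le heig) j
    _ = _ := (uvec_dotProduct_map_abs_Mmat_mulVec θ₀ q hj).symm

/-- If `q` has strictly positive entries and is an eigenvector of
`M₁⁺(θ₀) = [[cos θ₀, sin θ₀], [sin θ₀, 0]]` with eigenvalue `ρ > 0`, then for every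
`j ≥ 1`, `⟨u_j, |M_j(θ₀)| u_j⟩ ≥ ρ^j ‖u_j‖²` (Euclidean inner product and norm). -/
theorem stmt12 (θ₀ ρ : ℝ) (hθ0 : 0 < θ₀) (hθ1 : θ₀ < Real.pi / 2) (hρ : 0 < ρ)
    (q : Fin 2 → ℝ) (hq0 : 0 < q 0) (hq1 : 0 < q 1)
    (heig : (Matrix.of ![![Real.cos θ₀, Real.sin θ₀], ![Real.sin θ₀, 0]]).mulVec q
      = ρ • q)
    (j : ℕ) (hj : 1 ≤ j) :
    ρ ^ j * ∑ i, (uvec q j i) ^ 2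
      ≤ ∑ i, uvec q j i * ((Mmat θ₀ j).map (fun t => |t|)).mulVec (uvec q j) i :=
  stmt12_general θ₀ ρ q hq0 hq1 heig j hj
end

section
/- There exists θ₀ ∈ (0, π/4) such that for every C > 0 there exist j ≥ 1 and a vector u ∈ ℝ^{2^j} with nonnegative entries and ‖u‖ = 1 such that ⟨u, |M_j(θ₀)| u⟩ > C. Consequently, although each M_j(θ₀) is an isometry (so the bilinear map D(u,v) = ⟨u, M(θ₀)v⟩ e₁ built from M(θ₀) = ⊕_j M_j(θ₀) is bounded on ℓ²), the associated absolute-kernel bilinear map |D|(u,v) = ⟨u, |M(θ₀)| v⟩ e₁ is unbounded on ℓ²: boundedness of D does not imply boundedness of |D|. -/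
open Matrix Real

set_option maxHeartbeats 1000000

lemma Mmat_transpose (θ : ℝ) : ∀ j, (Mmat θ j)ᵀ = Mmat θ j
  | 0 => by simp [Mmat]
  | 1 => by
      ext i k
      fin_cases i <;> fin_cases k <;> simp [Mmat]
  | (j+2) => by
      have ih := Mmat_transpose θ (j+1)
      show (Matrix.reindex _ _ _)ᵀ = _
      rw [Matrix.transpose_reindex, Matrix.fromBlocks_transpose]
      simp [Matrix.transpose_smul, ih, Mmat]

lemma Mmat_mul_self (θ : ℝ) : ∀ j, Mmat θ j * Mmat θ j = 1
  | 0 => by simp [Mmat]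
  | 1 => by
      ext i k
      fin_cases i <;> fin_cases k <;>
        simp [Mmat, Matrix.mul_apply, Fin.sum_univ_two, Matrix.one_apply] <;>
        nlinarith [Real.sin_sq_add_cos_sq θ]
  | (j+2) => by
      have ih := Mmat_mul_self θ (j+1)
      show (Matrix.reindex _ _ _) * (Matrix.reindex _ _ _) = 1
      rw [Matrix.reindex_apply, Matrix.submatrix_mul_equiv, Matrix.fromBlocks_multiply]
      have h1 : ∀ a b : ℝ, (a • Mmat θ (j+1)) * (b • Mmat θ (j+1)) = (a*b) • (1 : Matrix _ _ ℝ) := by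
        intro a b
        rw [Matrix.smul_mul, Matrix.mul_smul, ih, smul_smul]
      simp only [h1]
      have hsc := Real.sin_sq_add_cos_sq θ
      have e1 : (cos θ * cos θ) • (1 : Matrix (Fin (2^(j+1))) (Fin (2^(j+1))) ℝ)
          + (sin θ * sin θ) • 1 = 1 := by
        rw [← add_smul]; rw [show cos θ * cos θ + sin θ * sin θ = 1 by nlinarith]; simp
      have e2 : (cos θ * sin θ) • (1 : Matrix (Fin (2^(j+1))) (Fin (2^(j+1))) ℝ)
          + (sin θ * -cos θ) • 1 = 0 := by
        rw [← add_smul]; rw [show cos θ * sin θ + sin θ * -cos θ = 0 by ring]; simp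
      have e3 : (sin θ * cos θ) • (1 : Matrix (Fin (2^(j+1))) (Fin (2^(j+1))) ℝ)
          + (-cos θ * sin θ) • 1 = 0 := by
        rw [← add_smul]; rw [show sin θ * cos θ + -cos θ * sin θ = 0 by ring]; simp
      have e4 : (sin θ * sin θ) • (1 : Matrix (Fin (2^(j+1))) (Fin (2^(j+1))) ℝ)
          + (-cos θ * -cos θ) • 1 = 1 := by
        rw [← add_smul]; rw [show sin θ * sin θ + -cos θ * -cos θ = 1 by nlinarith]; simp
      rw [e1, e2, e3, e4, Matrix.fromBlocks_one]
      simp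

lemma abs_map_smul {m : Type*} (a : ℝ) (M : Matrix m m ℝ) :
    (a • M).map (fun t => |t|) = |a| • M.map (fun t => |t|) := by
  ext i k; simp [abs_mul]

lemma absMmat_row {θ : ℝ} (hc : 0 ≤ Real.cos θ) (hs : 0 ≤ Real.sin θ) :
    ∀ j : ℕ, ((Mmat θ (j+1)).map (fun t => |t|)).mulVec (fun _ => 1)
      = fun _ => (Real.cos θ + Real.sin θ) ^ (j+1)
  | 0 => by
      ext i
      fin_cases i <;>
        simp [Mmat, Matrix.mulVec, dotProduct, Fin.sum_univ_two,
          abs_of_nonneg hc, abs_of_nonneg hs] <;> ring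
  | (j+1) => by
      have ih := absMmat_row hc hs j
      show (((Matrix.reindex (pe (j+1)) (pe (j+1))) _).map _).mulVec _ = _
      rw [Matrix.reindex_apply, ← Matrix.submatrix_map,
        Matrix.fromBlocks_map]
      simp only [abs_map_smul]
      rw [Matrix.submatrix_mulVec_equiv]
      ext i
      have : ((fun (_ : Fin (2^(j+2))) => (1:ℝ)) ∘ ⇑(pe (j+1)).symm.symm) = fun _ => (1:ℝ) := rfl
      rw [this, Matrix.fromBlocks_mulVec]
      have h1 : ((fun (_ : Fin (2^(j+1)) ⊕ Fin (2^(j+1))) => (1:ℝ)) ∘ Sum.inl) = fun _ => (1:ℝ) := rfl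
      have h2 : ((fun (_ : Fin (2^(j+1)) ⊕ Fin (2^(j+1))) => (1:ℝ)) ∘ Sum.inr) = fun _ => (1:ℝ) := rfl
      rw [h1, h2]
      simp only [Matrix.smul_mulVec, ih, Function.comp_apply]
      rcases h : (pe (j+1)).symm i with x | x <;>
        simp [h, abs_of_nonneg hc, abs_of_nonneg hs, abs_neg, Pi.smul_apply, smul_eq_mul,
          pow_succ] <;> ring

lemma Mmat_isometry (θ : ℝ) (j : ℕ) (v : Fin (2^j) → ℝ) :
    ∑ i, ((Mmat θ j).mulVec v i)^2 = ∑ i, v i ^ 2 := by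
  have key : (Mmat θ j).mulVec v ⬝ᵥ (Mmat θ j).mulVec v = v ⬝ᵥ v := by
    rw [Matrix.dotProduct_mulVec, ← Matrix.mulVec_transpose, Mmat_transpose,
      Matrix.mulVec_mulVec, Mmat_mul_self, Matrix.one_mulVec]
  simpa [dotProduct, sq] using key

lemma const_sum_sq (k : ℕ) :
    ∑ _i : Fin (2^(k+1)), ((Real.sqrt (2^(k+1)))⁻¹ : ℝ)^2 = 1 := by
  rw [Finset.sum_const]
  have h2 : (0:ℝ) < 2^(k+1) := by positivity
  simp only [Finset.card_univ, Fintype.card_fin, nsmul_eq_mul]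
  rw [← Real.sqrt_inv, Real.sq_sqrt (by positivity)]
  rw [Nat.cast_pow, Nat.cast_ofNat]
  field_simp

lemma quad_form {θ : ℝ} (hc : 0 ≤ Real.cos θ) (hs : 0 ≤ Real.sin θ) (k : ℕ) :
    ∑ i, ((Real.sqrt (2^(k+1)))⁻¹ : ℝ) *
      (((Mmat θ (k+1)).map (fun t => |t|)).mulVec (fun _ => (Real.sqrt (2^(k+1)))⁻¹)) i
      = (Real.cos θ + Real.sin θ) ^ (k+1) := by
  set c : ℝ := (Real.sqrt (2^(k+1)))⁻¹ with hcdef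
  have hu : (fun (_ : Fin (2^(k+1))) => c) = c • (fun _ => (1:ℝ)) := by
    funext i; simp
  rw [hu, Matrix.mulVec_smul, absMmat_row hc hs k]
  have : ∀ i : Fin (2^(k+1)), c * (c • fun _ => (Real.cos θ + Real.sin θ)^(k+1)) i
      = c^2 * (Real.cos θ + Real.sin θ)^(k+1) := by
    intro i; simp [sq]; ring
  rw [Finset.sum_congr rfl (fun i _ => this i), Finset.sum_const]
  have hC2 : (2:ℝ)^(k+1) ≠ 0 := by positivity
  have hc2 : c^2 = ((2:ℝ)^(k+1))⁻¹ := by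
    rw [hcdef, ← Real.sqrt_inv, Real.sq_sqrt (by positivity)]
  simp only [Finset.card_univ, Fintype.card_fin, nsmul_eq_mul, hc2]
  rw [Nat.cast_pow, Nat.cast_ofNat]
  field_simp

lemma abs_tsum_le' (f : ℕ → ℝ) (h : Summable fun j => |f j|) :
    |∑' j, f j| ≤ ∑' j, |f j| := by
  simpa [Real.norm_eq_abs] using
    norm_tsum_le_tsum_norm (f := f) (by simpa [Real.norm_eq_abs] using h)

lemma cs_tsum {a b : ℕ → ℝ} (ha : ∀ j, 0 ≤ a j) (hb : ∀ j, 0 ≤ b j)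
    (hA : Summable (fun j => a j ^ 2)) (hB : Summable (fun j => b j ^ 2)) :
    Summable (fun j => a j * b j) ∧
    ∑' j, a j * b j ≤ Real.sqrt (∑' j, a j ^ 2) * Real.sqrt (∑' j, b j ^ 2) := by
  have hsum : Summable (fun j => a j * b j) := by
    apply Summable.of_nonneg_of_le (fun j => mul_nonneg (ha j) (hb j))
      (fun j => ?_) ((hA.add hB).div_const 2)
    nlinarith [sq_nonneg (a j - b j)]
  refine ⟨hsum, ?_⟩
  apply Summable.tsum_le_of_sum_le hsum
  intro s
  calc ∑ j ∈ s, a j * b j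
      ≤ Real.sqrt (∑ j ∈ s, a j^2) * Real.sqrt (∑ j ∈ s, b j^2) :=
        Real.sum_mul_le_sqrt_mul_sqrt s a b
    _ ≤ Real.sqrt (∑' j, a j^2) * Real.sqrt (∑' j, b j^2) := by
        gcongr
        · exact Summable.sum_le_tsum s (fun i _ => sq_nonneg _) hA
        · exact Summable.sum_le_tsum s (fun i _ => sq_nonneg _) hB

/-- There is `θ₀ ∈ (0, π/4)` such that the quadratic form of the
entrywise absolute value `|M_j(θ₀)|` is unbounded over nonnegative unit vectors as
`j → ∞`. Consequently, while the bilinear map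
`D(u,v) = ⟨u, (⊕_j M_j(θ₀)) v⟩ e₁` is bounded on `ℓ² ≅ ⊕_{j≥1} ℝ^{2^j}`
(each `M_j(θ₀)` being an isometry), the absolute-kernel map
`|D|(u,v) = ⟨u, |⊕_j M_j(θ₀)| v⟩ e₁` is unbounded on `ℓ²`. -/
theorem stmt13 : ∃ θ₀ : ℝ, 0 < θ₀ ∧ θ₀ < Real.pi / 4 ∧
    (∀ C : ℝ, 0 < C → ∃ j : ℕ, 1 ≤ j ∧ ∃ u : Fin (2 ^ j) → ℝ,
      (∀ i, 0 ≤ u i) ∧ Real.sqrt (∑ i, (u i) ^ 2) = 1 ∧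
      C < ∑ i, u i * ((Mmat θ₀ j).map (fun t => |t|)).mulVec u i) ∧
    -- `D` is bounded on `ℓ² ≅ ⊕_{j ≥ 1} ℝ^{2^j}` (blocks indexed by `j+1`, `j : ℕ`):
    (∀ u v : (j : ℕ) → Fin (2 ^ (j + 1)) → ℝ,
      Summable (fun j => ∑ i, (u j i) ^ 2) → Summable (fun j => ∑ i, (v j i) ^ 2) →
      Summable (fun j => ∑ i, u j i * (Mmat θ₀ (j + 1)).mulVec (v j) i) ∧
      |∑' j : ℕ, ∑ i, u j i * (Mmat θ₀ (j + 1)).mulVec (v j) i|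
        ≤ Real.sqrt (∑' j : ℕ, ∑ i, (u j i) ^ 2)
          * Real.sqrt (∑' j : ℕ, ∑ i, (v j i) ^ 2)) ∧
    -- but `|D|` is unbounded on `ℓ²`:
    (∀ C : ℝ, 0 < C → ∃ u v : (j : ℕ) → Fin (2 ^ (j + 1)) → ℝ,
      Summable (fun j => ∑ i, (u j i) ^ 2) ∧ Summable (fun j => ∑ i, (v j i) ^ 2) ∧
      Summable (fun j => ∑ i,
        u j i * ((Mmat θ₀ (j + 1)).map (fun t => |t|)).mulVec (v j) i) ∧
      C * (Real.sqrt (∑' j : ℕ, ∑ i, (u j i) ^ 2)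
           * Real.sqrt (∑' j : ℕ, ∑ i, (v j i) ^ 2))
        < |∑' j : ℕ, ∑ i,
            u j i * ((Mmat θ₀ (j + 1)).map (fun t => |t|)).mulVec (v j) i|) := by
  have hc : 0 ≤ Real.cos (Real.pi / 6) := by
    rw [Real.cos_pi_div_six]; positivity
  have hs : 0 ≤ Real.sin (Real.pi / 6) := by
    rw [Real.sin_pi_div_six]; norm_num
  have hr : 1 < Real.cos (Real.pi / 6) + Real.sin (Real.pi / 6) := by
    rw [Real.cos_pi_div_six, Real.sin_pi_div_six]
    have h3 : (1:ℝ) < Real.sqrt 3 := by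
      rw [show (1:ℝ) = Real.sqrt 1 by simp]
      exact Real.sqrt_lt_sqrt (by norm_num) (by norm_num)
    linarith
  set r : ℝ := Real.cos (Real.pi / 6) + Real.sin (Real.pi / 6) with hrdef
  refine ⟨Real.pi / 6, by positivity,
    div_lt_div_of_pos_left Real.pi_pos (by norm_num) (by norm_num), ?_, ?_, ?_⟩
  · -- part 1
    intro C hC
    obtain ⟨n, hn⟩ := pow_unbounded_of_one_lt C hr
    refine ⟨max n 1, le_max_right _ _, ?_⟩
    obtain ⟨k, hk⟩ : ∃ k, max n 1 = k + 1 := ⟨max n 1 - 1, by omega⟩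
    rw [hk]
    refine ⟨fun _ => (Real.sqrt (2^(k+1)))⁻¹, fun i => by positivity, ?_, ?_⟩
    · rw [const_sum_sq]; exact Real.sqrt_one
    · calc C < r ^ n := hn
        _ ≤ r ^ (k+1) := pow_le_pow_right₀ hr.le (hk ▸ le_max_left n 1)
        _ = _ := (quad_form hc hs k).symm
  · -- part 2 : boundedness of D
    intro u v hu hv
    set a : ℕ → ℝ := fun j => Real.sqrt (∑ i, (u j i)^2) with ha
    set b : ℕ → ℝ := fun j => Real.sqrt (∑ i, (v j i)^2) with hb
    have ha2 : ∀ j, a j ^ 2 = ∑ i, (u j i)^2 := fun j =>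
      Real.sq_sqrt (Finset.sum_nonneg fun i _ => sq_nonneg _)
    have hb2 : ∀ j, b j ^ 2 = ∑ i, (v j i)^2 := fun j =>
      Real.sq_sqrt (Finset.sum_nonneg fun i _ => sq_nonneg _)
    have hA : Summable (fun j => a j ^ 2) := by
      apply hu.congr; intro j; exact (ha2 j).symm
    have hB : Summable (fun j => b j ^ 2) := by
      apply hv.congr; intro j; exact (hb2 j).symm
    have hbound : ∀ j, |∑ i, u j i * (Mmat (Real.pi/6) (j+1)).mulVec (v j) i| ≤ a j * b j := by
      intro j
      have h1 : (∑ i, u j i * (Mmat (Real.pi/6) (j+1)).mulVec (v j) i)^2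
          ≤ (∑ i, (u j i)^2) * (∑ i, ((Mmat (Real.pi/6) (j+1)).mulVec (v j) i)^2) :=
        Finset.sum_mul_sq_le_sq_mul_sq _ _ _
      rw [Mmat_isometry] at h1
      have h2 : (∑ i, u j i * (Mmat (Real.pi/6) (j+1)).mulVec (v j) i)^2 ≤ (a j * b j)^2 := by
        rw [mul_pow, ha2, hb2]; exact h1
      calc |∑ i, u j i * (Mmat (Real.pi/6) (j+1)).mulVec (v j) i|
          = Real.sqrt ((∑ i, u j i * (Mmat (Real.pi/6) (j+1)).mulVec (v j) i)^2) :=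
            (Real.sqrt_sq_eq_abs _).symm
        _ ≤ Real.sqrt ((a j * b j)^2) := Real.sqrt_le_sqrt h2
        _ = a j * b j := Real.sqrt_sq (mul_nonneg (Real.sqrt_nonneg _) (Real.sqrt_nonneg _))
    obtain ⟨hab_sum, hab_le⟩ := cs_tsum (fun j => Real.sqrt_nonneg _)
      (fun j => Real.sqrt_nonneg _) hA hB
    set F : ℕ → ℝ := fun j => ∑ i, u j i * (Mmat (Real.pi/6) (j+1)).mulVec (v j) i with hF
    have habsum : Summable (fun j => |F j|) :=
      Summable.of_nonneg_of_le (fun j => abs_nonneg _) hbound hab_sum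
    have hfsum : Summable F := habsum.of_abs
    refine ⟨hfsum, ?_⟩
    calc |∑' j, F j|
        ≤ ∑' j, |F j| := abs_tsum_le' F habsum
      _ ≤ ∑' j, a j * b j := Summable.tsum_le_tsum hbound habsum hab_sum
      _ ≤ Real.sqrt (∑' j, a j ^ 2) * Real.sqrt (∑' j, b j ^ 2) := hab_le
      _ = _ := by rw [tsum_congr ha2, tsum_congr hb2]
  · -- part 3 : unboundedness of |D|
    intro C hC
    obtain ⟨n, hn⟩ := pow_unbounded_of_one_lt C hr
    obtain ⟨k, hk⟩ : ∃ k, max n 1 = k + 1 := ⟨max n 1 - 1, by omega⟩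
    set c : ℝ := (Real.sqrt (2^(k+1)))⁻¹ with hcdef
    refine ⟨fun m _ => if m = k then c else 0, fun m _ => if m = k then c else 0, ?_⟩
    have hUsq : ∀ m, (∑ i : Fin (2^(m+1)), (if m = k then c else 0)^2)
        = if m = k then 1 else 0 := by
      intro m
      by_cases h : m = k
      · subst h; simp only [if_pos rfl]; exact const_sum_sq _
      · simp [h]
    have hUsum : Summable (fun m => ∑ i : Fin (2^(m+1)), (if m = k then c else 0)^2) := by
      apply summable_of_ne_finset_zero (s := {k})
      intro m hm
      simp only [Finset.mem_singleton] at hm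
      rw [hUsq]; simp [hm]
    have htsumU : (∑' m, ∑ i : Fin (2^(m+1)), (if m = k then c else 0)^2) = 1 := by
      rw [tsum_eq_single k]
      · rw [hUsq]; simp
      · intro m hm; rw [hUsq]; simp [hm]
    have hfval : ∀ m, (∑ i, (if m = k then c else 0) *
        ((Mmat (Real.pi/6) (m+1)).map (fun t => |t|)).mulVec
          (fun _ => if m = k then c else 0) i)
        = if m = k then r^(k+1) else 0 := by
      intro m
      by_cases h : m = k
      · subst h
        simp only [if_pos rfl]
        exact quad_form hc hs _
      · simp [h]
    have hfsum : Summable (fun m => ∑ i, (if m = k then c else 0) *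
        ((Mmat (Real.pi/6) (m+1)).map (fun t => |t|)).mulVec
          (fun _ => if m = k then c else 0) i) := by
      apply summable_of_ne_finset_zero (s := {k})
      intro m hm
      simp only [Finset.mem_singleton] at hm
      rw [hfval]; simp [hm]
    have htsumf : (∑' m, ∑ i, (if m = k then c else 0) *
        ((Mmat (Real.pi/6) (m+1)).map (fun t => |t|)).mulVec
          (fun _ => if m = k then c else 0) i) = r^(k+1) := by
      rw [tsum_eq_single k]
      · rw [hfval]; simp
      · intro m hm; rw [hfval]; simp [hm]
    refine ⟨hUsum, hUsum, hfsum, ?_⟩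
    rw [htsumU, htsumf, Real.sqrt_one]
    have hrpos : (0:ℝ) < r^(k+1) := by positivity
    rw [abs_of_pos hrpos]
    calc C * (1 * 1) = C := by ring
      _ < r ^ n := hn
      _ ≤ r ^ (k+1) := pow_le_pow_right₀ hr.le (hk ▸ le_max_left n 1)
end

section
/- Fix j ≥ 1, let T_j = M_j(π/4), let w_j ∈ ℝ^{2^j} be the vector with all entries 2^{−j/2}, set D_j(v,v) = ⟨v, w_j⟩ T_j v, and let a_j = 1/(j·2^{j/2}). Then sup{ |(D_j(v,v))₁| : v ∈ ℝ^{2^j}, |v_m| ≤ a_j for all m } = 1/j², and for every k with 2 ≤ k ≤ 2^j, sup{ |(D_j(v,v))_k| : v ∈ ℝ^{2^j}, |v_m| ≤ a_j for all m } = 1/(4j²). -/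
/-! All entries of `T_j = M_j(π/4)` are `±2^{-j/2}`; its first row is constant and every other
row sums to zero, so has as many positive as negative entries. If `P` and `Q` are the sums of `v`
over the positions where the `k`-th row is positive resp. negative, then
`(D_j(v,v))_k = 2^{-j} (P + Q)(P - Q) = 2^{-j} (P² - Q²)`, while `|P|` and `|Q|` are at most `a_j`
times the number of those positions. The bound is attained by putting `a_j` on the larger of the
two position sets and `0` elsewhere. -/

open Finset Real

lemma pe_inl_zero (j : ℕ) : pe j (Sum.inl ⟨0, by positivity⟩) = ⟨0, by positivity⟩ := by
  ext; simp [pe]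

lemma Mmat_add_two_apply (θ : ℝ) (j : ℕ) (x y : Fin (2 ^ (j + 1)) ⊕ Fin (2 ^ (j + 1))) :
    Mmat θ (j + 2) (pe (j + 1) x) (pe (j + 1) y) =
      Matrix.fromBlocks
        (cos θ • Mmat θ (j + 1)) (sin θ • Mmat θ (j + 1))
        (sin θ • Mmat θ (j + 1)) ((-cos θ) • Mmat θ (j + 1)) x y := by
  simp [Mmat]

lemma abs_Mmat_pi_div_four_apply {j : ℕ} (hj : 1 ≤ j) (k m : Fin (2 ^ j)) :
    |Mmat (π / 4) j k m| = cos (π / 4) ^ j := by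
  obtain ⟨j, rfl⟩ := Nat.exists_eq_add_of_le' hj
  clear hj
  induction j with
  | zero =>
    fin_cases k <;> fin_cases m <;> simp [Mmat] <;> positivity
  | succ j ih =>
    obtain ⟨x, rfl⟩ := (pe (j + 1)).surjective k
    obtain ⟨y, rfl⟩ := (pe (j + 1)).surjective m
    rcases x with x | x <;> rcases y with y | y <;>
      simp [Mmat_add_two_apply, abs_mul, ih, pow_succ'] <;> positivity

lemma Mmat_pi_div_four_zero_apply {j : ℕ} (hj : 1 ≤ j) (m : Fin (2 ^ j)) :
    Mmat (π / 4) j ⟨0, by positivity⟩ m = cos (π / 4) ^ j := by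
  obtain ⟨j, rfl⟩ := Nat.exists_eq_add_of_le' hj
  clear hj
  induction j with
  | zero => fin_cases m <;> simp [Mmat]
  | succ j ih =>
    obtain ⟨y, rfl⟩ := (pe (j + 1)).surjective m
    rw [← pe_inl_zero]
    rcases y with y | y <;>
      simp only [Mmat_add_two_apply, Matrix.fromBlocks_apply₁₁, Matrix.fromBlocks_apply₁₂,
        Matrix.smul_apply, smul_eq_mul, ih, sin_pi_div_four, cos_pi_div_four, pow_succ']

lemma sum_Mmat_pi_div_four_row_eq_zero {j : ℕ} (hj : 1 ≤ j) {k : Fin (2 ^ j)}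
    (hk : k ≠ ⟨0, by positivity⟩) : ∑ m, Mmat (π / 4) j k m = 0 := by
  obtain ⟨j, rfl⟩ := Nat.exists_eq_add_of_le' hj
  clear hj
  induction j with
  | zero => fin_cases k <;> simp_all [Mmat]
  | succ j ih =>
    obtain ⟨x, rfl⟩ := (pe (j + 1)).surjective k
    rw [← (pe (j + 1)).sum_comp, Fintype.sum_sum_type]
    rcases x with i | i
    · have hi : i ≠ ⟨0, by positivity⟩ := by rintro rfl; exact hk (pe_inl_zero _)
      simp [Mmat_add_two_apply, ← mul_sum, ih hi]
    · simp [Mmat_add_two_apply, ← mul_sum]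

lemma abs_sum_le_card_mul {ι : Type*} {s : Finset ι} {v : ι → ℝ} {a : ℝ} (hv : ∀ m, |v m| ≤ a) :
    |∑ m ∈ s, v m| ≤ #s * a :=
  (abs_sum_le_sum_abs v s).trans <| by simpa using sum_le_card_nsmul s _ a fun m _ ↦ hv m

section SignedRow

variable {ι : Type*} [Fintype ι] [DecidableEq ι] (S : Finset ι) {r : ι → ℝ} {c : ℝ}

lemma dotProduct_eq_of_eq_ite (hr : ∀ m, r m = if m ∈ S then c else -c) (v : ι → ℝ) :
    r ⬝ᵥ v = c * ∑ m ∈ S, v m - c * ∑ m ∈ Sᶜ, v m := by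
  rw [dotProduct, ← sum_add_sum_compl S, mul_sum, mul_sum, sub_eq_add_neg, ← sum_neg_distrib]
  congr 1 <;> refine sum_congr rfl fun m hm ↦ ?_
  · simp [hr, hm]
  · simp [hr, mem_compl.mp hm]

lemma card_eq_card_compl_of_sum_eq_zero (hr : ∀ m, r m = if m ∈ S then c else -c) (hc : c ≠ 0)
    (hsum : ∑ m, r m = 0) : #S = #Sᶜ := by
  rw [← dotProduct_one, dotProduct_eq_of_eq_ite S hr] at hsum
  simpa [hc, sub_eq_zero] using hsum

lemma sum_mul_dotProduct_eq_of_eq_ite (hr : ∀ m, r m = if m ∈ S then c else -c) (v : ι → ℝ) :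
    (∑ m, v m * c) * r ⬝ᵥ v = c ^ 2 * ((∑ m ∈ S, v m) ^ 2 - (∑ m ∈ Sᶜ, v m) ^ 2) := by
  rw [dotProduct_eq_of_eq_ite S hr, ← sum_mul, ← sum_add_sum_compl S]
  ring

lemma isGreatest_abs_sum_mul_dotProduct (hr : ∀ m, r m = if m ∈ S then c else -c) {a : ℝ}
    (ha : 0 ≤ a) :
    IsGreatest {y | ∃ v : ι → ℝ, (∀ m, |v m| ≤ a) ∧ y = |(∑ m, v m * c) * r ⬝ᵥ v|}
      ((c * (max #S #Sᶜ : ℕ) * a) ^ 2) := by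
  simp_rw [sum_mul_dotProduct_eq_of_eq_ite S hr]
  constructor
  · rcases le_total #Sᶜ #S with h | h
    · refine ⟨fun m ↦ if m ∈ S then a else 0, fun m ↦ ?_, ?_⟩
      · dsimp only; split_ifs <;> simp [abs_of_nonneg ha, ha]
      have hP : ∑ m ∈ S, (if m ∈ S then a else 0) = #S * a := by
        rw [sum_ite_mem, inter_self, sum_const, nsmul_eq_mul]
      have hQ : ∑ m ∈ Sᶜ, (if m ∈ S then a else 0) = 0 :=
        sum_eq_zero fun m hm ↦ if_neg (mem_compl.mp hm)
      rw [hP, hQ, max_eq_left h, zero_pow two_ne_zero, sub_zero, abs_of_nonneg (by positivity)]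
      ring
    · refine ⟨fun m ↦ if m ∈ Sᶜ then a else 0, fun m ↦ ?_, ?_⟩
      · dsimp only; split_ifs <;> simp [abs_of_nonneg ha, ha]
      have hP : ∑ m ∈ S, (if m ∈ Sᶜ then a else 0) = 0 :=
        sum_eq_zero fun m hm ↦ if_neg (notMem_compl.mpr hm)
      have hQ : ∑ m ∈ Sᶜ, (if m ∈ Sᶜ then a else 0) = #Sᶜ * a := by
        rw [sum_ite_mem, inter_self, sum_const, nsmul_eq_mul]
      rw [hP, hQ, max_eq_right h, zero_pow two_ne_zero, zero_sub, mul_neg, abs_neg,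
        abs_of_nonneg (by positivity)]
      ring
  · rintro y ⟨v, hv, rfl⟩
    set N : ℝ := ((max #S #Sᶜ : ℕ) : ℝ)
    have hsq {s : Finset ι} (hs : #s ≤ max #S #Sᶜ) : (∑ m ∈ s, v m) ^ 2 ≤ (N * a) ^ 2 := by
      rw [← sq_abs]
      gcongr
      exact (abs_sum_le_card_mul hv).trans (by gcongr; exact Nat.cast_le.mpr hs)
    rw [abs_mul, abs_of_nonneg (sq_nonneg c), show (c * N * a) ^ 2 = c ^ 2 * (N * a) ^ 2 by ring]
    gcongr
    exact abs_sub_le_of_nonneg_of_le (sq_nonneg _) (hsq (le_max_left ..)) (sq_nonneg _)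
      (hsq (le_max_right ..))

end SignedRow

lemma cos_pi_div_four_pow (j : ℕ) : cos (π / 4) ^ j = (2 : ℝ) ^ (-(j : ℝ) / 2) := by
  rw [show -(j : ℝ) / 2 = -(1 / 2) * j by ring, rpow_mul_natCast zero_le_two, rpow_neg zero_le_two,
    ← sqrt_eq_rpow, cos_pi_div_four, sqrt_div_self]

lemma two_rpow_neg_half_mul_two_pow_mul_one_div (n : ℕ) :
    (2 : ℝ) ^ (-(n : ℝ) / 2) * 2 ^ n * (1 / (n * 2 ^ ((n : ℝ) / 2))) = 1 / n := by
  have h : (2 : ℝ) ^ (-(n : ℝ) / 2) * 2 ^ n = 2 ^ ((n : ℝ) / 2) := by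
    rw [← rpow_natCast, ← rpow_add two_pos]; ring_nf
  rw [h]
  field_simp

/-- For `j ≥ 1`, `T_j = M_j(π/4)`, `w_j` the vector with all
entries `2^{−j/2}`, `D_j(v,v) = ⟨v, w_j⟩ T_j v` and `a_j = 1/(j·2^{j/2})`:
the sup over `{v : |v_m| ≤ a_j}` of the first component of `|D_j(v,v)|` equals
`1/j²`, and of every other component equals `1/(4j²)`. -/
theorem stmt16 (j : ℕ) (hj : 1 ≤ j) :
    sSup {y : ℝ | ∃ v : Fin (2 ^ j) → ℝ,
        (∀ m, |v m| ≤ 1 / ((j : ℝ) * (2 : ℝ) ^ ((j : ℝ) / 2))) ∧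
        y = |(∑ m, v m * (2 : ℝ) ^ (-(j : ℝ) / 2))
              * (Mmat (Real.pi / 4) j).mulVec v ⟨0, by positivity⟩|}
      = 1 / (j : ℝ) ^ 2 ∧
    ∀ k : Fin (2 ^ j), k ≠ ⟨0, by positivity⟩ →
      sSup {y : ℝ | ∃ v : Fin (2 ^ j) → ℝ,
          (∀ m, |v m| ≤ 1 / ((j : ℝ) * (2 : ℝ) ^ ((j : ℝ) / 2))) ∧
          y = |(∑ m, v m * (2 : ℝ) ^ (-(j : ℝ) / 2))
                * (Mmat (Real.pi / 4) j).mulVec v k|}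
        = 1 / (4 * (j : ℝ) ^ 2) := by
  set c : ℝ := 2 ^ (-(j : ℝ) / 2)
  set a : ℝ := 1 / ((j : ℝ) * 2 ^ ((j : ℝ) / 2))
  have hc : 0 < c := by positivity
  have ha : 0 ≤ a := by positivity
  have hca : c * 2 ^ j * a = 1 / j := two_rpow_neg_half_mul_two_pow_mul_one_div j
  have habs (k m : Fin (2 ^ j)) : |Mmat (π / 4) j k m| = c := by
    rw [abs_Mmat_pi_div_four_apply hj, cos_pi_div_four_pow]
  constructor
  · have hr (m : Fin (2 ^ j)) :
        Mmat (π / 4) j ⟨0, by positivity⟩ m = if m ∈ univ then c else -c := by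
      rw [Mmat_pi_div_four_zero_apply hj, cos_pi_div_four_pow, if_pos (mem_univ m)]
    refine (isGreatest_abs_sum_mul_dotProduct univ hr ha).csSup_eq.trans ?_
    simp [hca]
  · intro k hk
    let S : Finset (Fin (2 ^ j)) := {m | Mmat (π / 4) j k m = c}
    have hr (m : Fin (2 ^ j)) : Mmat (π / 4) j k m = if m ∈ S then c else -c := by
      rcases (abs_eq hc.le).1 (habs k m) with h | h <;> simp [S, h]
    have hS : #S = #Sᶜ :=
      card_eq_card_compl_of_sum_eq_zero S hr hc.ne' (sum_Mmat_pi_div_four_row_eq_zero hj hk)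
    have h2S : (2 : ℝ) ^ j = 2 * #S := by
      rw [two_mul]
      nth_rewrite 2 [hS]
      exact_mod_cast (Fintype.card_fin _ ▸ card_add_card_compl S).symm
    refine (isGreatest_abs_sum_mul_dotProduct S hr ha).csSup_eq.trans ?_
    rw [← hS, max_self]
    calc (c * #S * a) ^ 2 = (c * 2 ^ j * a / 2) ^ 2 := by rw [h2S]; ring
      _ = 1 / (4 * (j : ℝ) ^ 2) := by rw [hca]; ring
end
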